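/- arXiv:1804.08466 — 7 statements merged into one kernel-verified Lean document; each statement's English description precedes it below -/
import Mathlib

section
/- Let F be a frame and A ⊆ F a sub-meet-semilattice generating F (every element of F is a supremum of a subset of A), with coverage C(a) = {B ⊆ ↓a ∩ A : ⨆ B = a}. Define a C-ideal to be a lower-closed subset I of A such that whenever I contains some S ∈ C(a) then a ∈ I. Then the map sending a C-ideal I to ⨆ I is an order isomorphism (indeed a frame isomorphism) from the set of C-ideals, ordered by inclusion, onto F. -/
/-- A `C`-ideal for the canonical coverage on a generating sub-meet-semilattice `A`
of a frame: a lower-closed (within `A`) subset of `A` closed under the coverings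
`S ⊆ ↓a ∩ A` with `sSup S = a`. -/
def IsCIdeal {F : Type*} [Order.Frame F] (A : Set F) (I : Set F) : Prop :=
  I ⊆ A ∧ (∀ b ∈ I, ∀ a ∈ A, a ≤ b → a ∈ I) ∧
    (∀ a ∈ A, ∀ S ⊆ {c | c ∈ A ∧ c ≤ a}, sSup S = a → S ⊆ I → a ∈ I)

/-- `I ↦ sSup I` is an order isomorphism from the `C`-ideals
(ordered by inclusion) onto `F`. -/
theorem stmt_1 {F : Type*} [Order.Frame F] (A : Set F)
    (hmeet : ∀ a ∈ A, ∀ b ∈ A, a ⊓ b ∈ A)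
    (hgen : ∀ x : F, ∃ B ⊆ A, sSup B = x) :
    ∃ e : {I : Set F // IsCIdeal A I} ≃o F, ∀ I, e I = sSup (I : Set F) := by
  -- the candidate inverse
  have hJideal : ∀ x : F, IsCIdeal A {a | a ∈ A ∧ a ≤ x} := by
    intro x
    refine ⟨fun a ha => ha.1, fun b hb a ha hab => ⟨ha, hab.trans hb.2⟩, ?_⟩
    intro a ha S hS hSup hSI
    exact ⟨ha, hSup ▸ sSup_le fun s hs => (hSI hs).2⟩
  have hSupJ : ∀ x : F, sSup {a | a ∈ A ∧ a ≤ x} = x := by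
    intro x
    obtain ⟨B, hBA, hBx⟩ := hgen x
    apply le_antisymm (sSup_le fun a ha => ha.2)
    rw [← hBx]
    exact sSup_le_sSup fun b hb => ⟨hBA hb, hBx ▸ le_sSup hb⟩
  have key : ∀ I : Set F, IsCIdeal A I → {a | a ∈ A ∧ a ≤ sSup I} = I := by
    intro I ⟨hIA, hlow, hcov⟩
    ext a
    constructor
    · rintro ⟨haA, hale⟩
      refine hcov a haA {c | ∃ i ∈ I, c = a ⊓ i} ?_ ?_ ?_
      · rintro c ⟨i, hi, rfl⟩
        exact ⟨hmeet a haA i (hIA hi), inf_le_left⟩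
      · have : sSup {c | ∃ i ∈ I, c = a ⊓ i} = a ⊓ sSup I := by
          rw [inf_sSup_eq]
          apply le_antisymm
          · apply sSup_le; rintro c ⟨i, hi, rfl⟩
            exact le_iSup₂_of_le i hi le_rfl
          · exact iSup₂_le fun i hi => le_sSup ⟨i, hi, rfl⟩
        rw [this, inf_eq_left.mpr hale]
      · rintro c ⟨i, hi, rfl⟩
        exact hlow i hi (a ⊓ i) (hmeet a haA i (hIA hi)) inf_le_right
    · intro haI
      exact ⟨hIA haI, le_sSup haI⟩
  refine ⟨{ toFun := fun I => sSup (I : Set F)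
            invFun := fun x => ⟨{a | a ∈ A ∧ a ≤ x}, hJideal x⟩
            left_inv := fun I => Subtype.ext (key I I.2)
            right_inv := fun x => hSupJ x
            map_rel_iff' := ?_ }, fun I => rfl⟩
  intro I J
  simp only [Equiv.coe_fn_mk]
  constructor
  · intro h a haI
    have haJ : a ∈ {b | b ∈ A ∧ b ≤ sSup (J : Set F)} :=
      ⟨I.2.1 haI, (le_sSup haI).trans h⟩
    rwa [key J J.2] at haJ
  · intro h
    exact sSup_le_sSup h
end

section
/- Let A be a meet-semilattice with coverage C̄. The map ν sending a subset I of A to the intersection of all C̄-ideals containing I, restricted to the frame of C-ideals for a subcoverage C ⊆ C̄, is a nucleus: it preserves binary meets, is inflationary, and is idempotent. -/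
/-- An ideal for a coverage `Cov` on a meet-semilattice: a lower set closed under
the coverings. -/
def IsCovIdeal {A : Type*} [SemilatticeInf A] (Cov : A → Set (Set A)) (I : Set A) : Prop :=
  (∀ a b : A, a ≤ b → b ∈ I → a ∈ I) ∧ ∀ a : A, ∀ S ∈ Cov a, S ⊆ I → a ∈ I

/-- `ν I` is the intersection of all `Cov`-ideals containing `I`. -/
def nuCov {A : Type*} [SemilatticeInf A] (Cov : A → Set (Set A)) (I : Set A) : Set A :=
  ⋂₀ {J | IsCovIdeal Cov J ∧ I ⊆ J}

lemma nuCov_isIdeal {A : Type*} [SemilatticeInf A] (Cov : A → Set (Set A)) (I : Set A) :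
    IsCovIdeal Cov (nuCov Cov I) := by
  constructor
  · intro a b hab hb J hJ
    exact hJ.1.1 a b hab (hb J hJ)
  · intro a S hS hSsub J hJ
    exact hJ.1.2 a S hS (fun s hs => hSsub hs J hJ)

lemma subset_nuCov {A : Type*} [SemilatticeInf A] (Cov : A → Set (Set A)) (I : Set A) :
    I ⊆ nuCov Cov I := fun _ hx _ hJ => hJ.2 hx

lemma nuCov_le {A : Type*} [SemilatticeInf A] (Cov : A → Set (Set A)) {I J : Set A}
    (hJ : IsCovIdeal Cov J) (h : I ⊆ J) : nuCov Cov I ⊆ J :=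
  fun _ hx => hx J ⟨hJ, h⟩

lemma nuCov_mono {A : Type*} [SemilatticeInf A] (Cov : A → Set (Set A)) {I J : Set A}
    (h : I ⊆ J) : nuCov Cov I ⊆ nuCov Cov J :=
  nuCov_le Cov (nuCov_isIdeal Cov J) (h.trans (subset_nuCov Cov J))

/-- for a coverage `C̄ = CovB` extending a coverage `C = Cov`, the map
`ν` sending `I` to the intersection of all `C̄`-ideals containing `I`, restricted to
the frame of `C`-ideals (whose binary meet is intersection), is a nucleus: it
preserves binary meets, is inflationary and is idempotent. -/
theorem stmt_2 {A : Type*} [SemilatticeInf A] (Cov CovB : A → Set (Set A))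
    (hsub : ∀ a, Cov a ⊆ CovB a)
    (hdownC : ∀ a, ∀ S ∈ Cov a, ∀ s ∈ S, s ≤ a)
    (hstabC : ∀ a b : A, b ≤ a → ∀ S ∈ Cov a, (fun s => s ⊓ b) '' S ∈ Cov b)
    (hdownB : ∀ a, ∀ S ∈ CovB a, ∀ s ∈ S, s ≤ a)
    (hstabB : ∀ a b : A, b ≤ a → ∀ S ∈ CovB a, (fun s => s ⊓ b) '' S ∈ CovB b) :
    (∀ I J : Set A, IsCovIdeal Cov I → IsCovIdeal Cov J →
        nuCov CovB (I ∩ J) = nuCov CovB I ∩ nuCov CovB J) ∧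
      (∀ I : Set A, IsCovIdeal Cov I → I ⊆ nuCov CovB I) ∧
      (∀ I : Set A, IsCovIdeal Cov I → nuCov CovB (nuCov CovB I) ⊆ nuCov CovB I) := by
  refine ⟨?_, fun I _ => subset_nuCov CovB I,
    fun I _ => nuCov_le CovB (nuCov_isIdeal CovB I) le_rfl⟩
  intro I J hI hJ
  apply Set.Subset.antisymm
  · exact Set.subset_inter (nuCov_mono CovB Set.inter_subset_left)
      (nuCov_mono CovB Set.inter_subset_right)
  -- key step: for x ∈ ν I and y ∈ ν J, x ⊓ y ∈ ν (I ∩ J)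
  have key : ∀ x ∈ nuCov CovB I, ∀ y ∈ nuCov CovB J, x ⊓ y ∈ nuCov CovB (I ∩ J) := by
    have step1 : ∀ b ∈ J, ∀ x ∈ nuCov CovB I, x ⊓ b ∈ nuCov CovB (I ∩ J) := by
      intro b hb
      have hK : IsCovIdeal CovB {x | x ⊓ b ∈ nuCov CovB (I ∩ J)} := by
        constructor
        · intro p q hpq hq
          exact (nuCov_isIdeal CovB (I ∩ J)).1 (p ⊓ b) (q ⊓ b)
            (inf_le_inf_right b hpq) hq
        · intro a S hS hSsub
          have hS' := hstabB a (a ⊓ b) inf_le_left S hS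
          refine (nuCov_isIdeal CovB (I ∩ J)).2 (a ⊓ b) _ hS' ?_
          rintro _ ⟨s, hs, rfl⟩
          have hsa : s ≤ a := hdownB a S hS s hs
          have : s ⊓ (a ⊓ b) = s ⊓ b := by
            rw [← inf_assoc, inf_eq_left.mpr hsa]
          show s ⊓ (a ⊓ b) ∈ _
          rw [this]
          exact hSsub hs
      have hIK : I ⊆ {x | x ⊓ b ∈ nuCov CovB (I ∩ J)} := by
        intro x hx
        exact subset_nuCov CovB (I ∩ J)
          ⟨hI.1 (x ⊓ b) x inf_le_left hx, hJ.1 (x ⊓ b) b inf_le_right hb⟩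
      exact fun x hx => nuCov_le CovB hK hIK hx
    intro x hx
    have hL : IsCovIdeal CovB {y | x ⊓ y ∈ nuCov CovB (I ∩ J)} := by
      constructor
      · intro p q hpq hq
        exact (nuCov_isIdeal CovB (I ∩ J)).1 (x ⊓ p) (x ⊓ q)
          (inf_le_inf_left x hpq) hq
      · intro a S hS hSsub
        have hS' := hstabB a (x ⊓ a) inf_le_right S hS
        have := (nuCov_isIdeal CovB (I ∩ J)).2 (x ⊓ a) _ hS' ?_
        · exact this
        rintro _ ⟨s, hs, rfl⟩
        have hsa : s ≤ a := hdownB a S hS s hs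
        have heq : s ⊓ (x ⊓ a) = x ⊓ s := by
          rw [inf_comm x a, ← inf_assoc, inf_eq_left.mpr hsa, inf_comm]
        show s ⊓ (x ⊓ a) ∈ _
        rw [heq]
        exact hSsub hs
    have hJL : J ⊆ {y | x ⊓ y ∈ nuCov CovB (I ∩ J)} := by
      intro b hb
      exact step1 b hb x hx
    exact fun y hy => nuCov_le CovB hL hJL hy
  intro a ha
  have := key a ha.1 a ha.2
  rwa [inf_idem] at this
end

section
/- Let {Xₙ} be T1 sober spaces, Y_k ⊆ X₁ × ⋯ × X_k closed compatible subspaces, and Y the space of all finite and infinite compatible sequences with the cylinder topology τ_cyl. Then (Y, τ_cyl) is sober: the canonical map Φ : Y → pt(τ_cyl), Φ(y)(A) = [y ∈ A], is a bijection. -/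
open Set Topology TopologicalSpace Filter

universe u

variable {X : ℕ → Type u}

/-- Restriction (truncation) of a finite sequence of length `l` to length `k ≤ l`. -/
def restrictSeq {X : ℕ → Type u} {k l : ℕ} (h : k ≤ l) (f : (i : Fin l) → X i.1) :
    (i : Fin k) → X i.1 :=
  fun i => f ⟨i.1, lt_of_lt_of_le i.2 h⟩

/-- The space `Y` of all finite and infinite compatible sequences for the family
of subspaces `Y k ⊆ X 0 × ⋯ × X (k-1)`. -/
def PathSpace (Y : (k : ℕ) → Set ((i : Fin k) → X i.1)) : Type u :=
  (Σ k : ℕ, {f : (i : Fin k) → X i.1 // f ∈ Y k}) ⊕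
    {g : (n : ℕ) → X n // ∀ k : ℕ, (fun i : Fin k => g i.1) ∈ Y k}

/-- The cylinder set `Z(A)` over `A` at level `k`: all sequences of length `≥ k`
whose initial segment of length `k` lies in `A`. -/
def Zcyl (Y : (k : ℕ) → Set ((i : Fin k) → X i.1)) (k : ℕ)
    (A : Set ((i : Fin k) → X i.1)) : Set (PathSpace Y) :=
  Sum.elim (fun q => ∃ h : k ≤ q.1, restrictSeq h q.2.1 ∈ A)
    (fun g => (fun i : Fin k => g.1 i.1) ∈ A)

/-- The cylinder topology `τ_cyl`, generated by the open cylinder sets. -/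
def tauCyl [∀ n, TopologicalSpace (X n)] (Y : (k : ℕ) → Set ((i : Fin k) → X i.1)) :
    TopologicalSpace (PathSpace Y) :=
  TopologicalSpace.generateFrom
    {S | ∃ (k : ℕ) (U : Set ((i : Fin k) → X i.1)), IsOpen U ∧ S = Zcyl Y k U}

/-- The length of a finite or infinite sequence. -/
def plen (Y : (k : ℕ) → Set ((i : Fin k) → X i.1)) (p : PathSpace Y) : ℕ∞ :=
  Sum.elim (fun q => (q.1 : ℕ∞)) (fun _ => (⊤ : ℕ∞)) p

/-- Truncation of an element of the path space to length `k ≤ plen p`. -/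
def truncSeq (Y : (k : ℕ) → Set ((i : Fin k) → X i.1)) (k : ℕ) :
    (p : PathSpace Y) → ((k : ℕ∞) ≤ plen Y p) → ((i : Fin k) → X i.1)
  | Sum.inl q, h => restrictSeq (by simpa [plen] using h) q.2.1
  | Sum.inr g, _ => fun i => g.1 i.1

/-- A set is saturated if it is the intersection of its open neighbourhoods. -/
def SaturatedSet {Z : Type*} [TopologicalSpace Z] (A : Set Z) : Prop :=
  A = ⋂₀ {U : Set Z | IsOpen U ∧ A ⊆ U}

/-- The patch topology of a topology `t`: the coarsest topology refining both `t`
and the cocompact topology (generated by complements of `t`-compact saturated sets). -/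
def patchOf {Z : Type*} (t : TopologicalSpace Z) : TopologicalSpace Z :=
  t ⊓ TopologicalSpace.generateFrom
    {V | ∃ K : Set Z, @IsCompact Z t K ∧ @SaturatedSet Z t K ∧ V = Kᶜ}

/-- The canonical point of the frame of opens associated to a point of a space. -/
def pointOf {Z : Type*} [TopologicalSpace Z] (y : Z) : FrameHom (Opens Z) Prop where
  toFun U := y ∈ U
  map_inf' U V := by
    rw [eq_iff_iff]
    exact Iff.rfl
  map_top' := by simp
  map_sSup' S := by
    simp only [eq_iff_iff, sSup_Prop_eq, Opens.mem_sSup, Set.mem_image]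
    constructor
    · rintro ⟨U, hU, hy⟩; exact ⟨y ∈ U, ⟨U, hU, Iff.rfl⟩, hy⟩
    · rintro ⟨p, ⟨U, hU, hp⟩, hyp⟩; exact ⟨U, hU, hp.mpr hyp⟩

/-!
Specialisation in the cylinder topology is the prefix order: `y ⤳ z` as soon as every truncation
of `z` is a truncation of `y`. If `C` is irreducible and closed, the truncations of its elements
to a fixed length `k` form an irreducible subset of `X 0 × ⋯ × X (k-1)`, hence at most one point,
because the factors are `T1` and sober. So `C` is a chain of prefixes; its generic point is its
longest element or, when lengths are unbounded, the infinite sequence the truncations glue to,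
which lies in `C` because `C` is closed and every basic neighbourhood of it meets `C`.
Finally, in a sober `T0` space a frame point `p` is `pointOf x` for the generic point `x` of the
complement of the largest open set that `p` sends to `False`.
-/

theorem IsPreirreducible.subsingleton_of_quasiSober {Z : Type*} [TopologicalSpace Z]
    [T1Space Z] [QuasiSober Z] {s : Set Z} (hs : IsPreirreducible s) : s.Subsingleton := by
  rcases s.eq_empty_or_nonempty with rfl | hne
  · exact subsingleton_empty
  have hgen := IsIrreducible.isGenericPoint_genericPoint_closure ⟨hne, hs⟩
  have hclosure : closure s = {_} := hgen.def.symm.trans closure_singleton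
  exact subsingleton_singleton.anti (hclosure ▸ subset_closure)

theorem IsPreirreducible.subsingleton_pi {ι : Type*} {Z : ι → Type*}
    [∀ i, TopologicalSpace (Z i)] [∀ i, T1Space (Z i)] [∀ i, QuasiSober (Z i)]
    {s : Set (∀ i, Z i)} (hs : IsPreirreducible s) : s.Subsingleton :=
  fun _ hf _ hg => funext fun i =>
    (hs.image _ (continuous_apply i).continuousOn).subsingleton_of_quasiSober
      (mem_image_of_mem _ hf) (mem_image_of_mem _ hg)

theorem bijective_pointOf {Z : Type*} [TopologicalSpace Z] [T0Space Z] [QuasiSober Z] :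
    Function.Bijective (pointOf : Z → FrameHom (Opens Z) Prop) := by
  refine ⟨fun a b hab => (inseparable_iff_forall_isOpen.2 fun s hs => ?_).eq, fun p => ?_⟩
  · exact iff_of_eq (DFunLike.congr_fun hab ⟨s, hs⟩)
  set F : Opens Z := sSup {U | ¬ p U}
  have hF : ¬ p F := by
    simp only [F, map_sSup, sSup_Prop_eq, mem_image, mem_ofPred_eq]
    rintro ⟨_, ⟨U, hU, rfl⟩, hpU⟩
    exact hU hpU
  have key : ∀ U : Opens Z, p U ↔ ((F : Set Z)ᶜ ∩ U).Nonempty := by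
    intro U
    rw [inter_comm, inter_compl_nonempty_iff, SetLike.coe_subset_coe]
    exact ⟨fun hU hle => hF (OrderHomClass.mono p hle hU),
      fun h => by_contra fun hU => h (le_sSup hU)⟩
  have hirr : IsIrreducible (F : Set Z)ᶜ := by
    refine ⟨by simpa using (key ⊤).1 (TopHomClass.map_top p ▸ trivial), fun U V hU hV hSU hSV => ?_⟩
    have := (key (⟨U, hU⟩ ⊓ ⟨V, hV⟩)).1 (by
      rw [InfHomClass.map_inf]; exact ⟨(key ⟨U, hU⟩).2 hSU, (key ⟨V, hV⟩).2 hSV⟩)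
    simpa [inter_assoc] using this
  obtain ⟨x, hx⟩ := QuasiSober.sober hirr F.isOpen.isClosed_compl
  exact ⟨x, DFunLike.ext _ _ fun U => propext ((hx.mem_open_set_iff U.isOpen).trans (key U).symm)⟩

section PathSpace

variable {Y : (k : ℕ) → Set ((i : Fin k) → X i.1)}

theorem mem_Zcyl_iff {k : ℕ} {A : Set ((i : Fin k) → X i.1)} {p : PathSpace Y} :
    p ∈ Zcyl Y k A ↔ ∃ h : (k : ℕ∞) ≤ plen Y p, truncSeq Y k p h ∈ A := by
  rcases p with q | g
  · exact ⟨fun ⟨h, hA⟩ => ⟨by simpa [plen] using h, hA⟩,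
      fun ⟨h, hA⟩ => ⟨by simpa [plen] using h, hA⟩⟩
  · exact ⟨fun hA => ⟨le_top, hA⟩, fun ⟨_, hA⟩ => hA⟩

theorem restrictSeq_truncSeq {k l : ℕ} (hkl : k ≤ l) (p : PathSpace Y)
    (hl : (l : ℕ∞) ≤ plen Y p) (hk : (k : ℕ∞) ≤ plen Y p) :
    restrictSeq hkl (truncSeq Y l p hl) = truncSeq Y k p hk := by
  cases p <;> rfl

theorem truncSeq_mem (hcompat : ∀ (k l : ℕ) (h : k ≤ l), ∀ f ∈ Y l, restrictSeq h f ∈ Y k)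
    {k : ℕ} (p : PathSpace Y) (h : (k : ℕ∞) ≤ plen Y p) : truncSeq Y k p h ∈ Y k := by
  rcases p with q | g
  · exact hcompat k q.1 (by simpa [plen] using h) q.2.1 q.2.2
  · exact g.2 k

theorem Zcyl_zero_univ : Zcyl Y 0 univ = univ :=
  eq_univ_of_forall fun _ => mem_Zcyl_iff.2 ⟨by simp, trivial⟩

theorem Zcyl_inter_Zcyl {k l : ℕ} (hkl : k ≤ l) (U : Set ((i : Fin k) → X i.1))
    (V : Set ((i : Fin l) → X i.1)) :
    Zcyl Y k U ∩ Zcyl Y l V = Zcyl Y l (restrictSeq hkl ⁻¹' U ∩ V) := by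
  ext p
  simp only [mem_inter_iff, mem_Zcyl_iff, mem_preimage]
  constructor
  · rintro ⟨⟨hk, hU⟩, hl, hV⟩
    exact ⟨hl, restrictSeq_truncSeq hkl p hl hk ▸ hU, hV⟩
  · rintro ⟨hl, hU, hV⟩
    have hk : (k : ℕ∞) ≤ plen Y p := le_trans (by exact_mod_cast hkl) hl
    exact ⟨⟨hk, restrictSeq_truncSeq hkl p hl hk ▸ hU⟩, hl, hV⟩

theorem eq_of_forall_mem_Zcyl_iff {a b : PathSpace Y}
    (h : ∀ k A, a ∈ Zcyl Y k A ↔ b ∈ Zcyl Y k A) : a = b := by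
  rcases a with ⟨k, f, hf⟩ | ⟨f, hf⟩ <;> rcases b with ⟨l, g, hg⟩ | ⟨g, hg⟩
  · obtain ⟨hkl, hgf⟩ : ∃ h : k ≤ l, restrictSeq h g = f := (h k {f}).1 ⟨le_rfl, rfl⟩
    obtain ⟨hlk, -⟩ : ∃ h : l ≤ k, restrictSeq h f = g := (h l {g}).2 ⟨le_rfl, rfl⟩
    obtain rfl := le_antisymm hkl hlk
    obtain rfl : g = f := hgf
    rfl
  · obtain ⟨hk, -⟩ := (h (k + 1) univ).2 trivial
    exact absurd hk k.not_succ_le_self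
  · obtain ⟨hl, -⟩ := (h (l + 1) univ).1 trivial
    exact absurd hl l.not_succ_le_self
  · congr
    funext n
    have hfg : (fun i : Fin (n + 1) => g i) = fun i : Fin (n + 1) => f i :=
      (h (n + 1) {fun i : Fin (n + 1) => f i}).1 rfl
    exact (congrFun hfg ⟨n, n.lt_succ_self⟩).symm

attribute [local instance] tauCyl

variable [∀ n, TopologicalSpace (X n)]

theorem continuous_restrictSeq {k l : ℕ} (h : k ≤ l) : Continuous (restrictSeq (X := X) h) :=
  continuous_pi fun _ => continuous_apply _

theorem isOpen_Zcyl {k : ℕ} {U : Set ((i : Fin k) → X i.1)} (hU : IsOpen U) :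
    IsOpen (Zcyl Y k U) :=
  isOpen_generateFrom_of_mem ⟨k, U, hU, rfl⟩

theorem isTopologicalBasis_Zcyl :
    IsTopologicalBasis
      {S : Set (PathSpace Y) | ∃ (k : ℕ) (U : Set ((i : Fin k) → X i.1)), IsOpen U ∧
        S = Zcyl Y k U} := by
  have hbasis := isTopologicalBasis_of_subbasis_of_inter (t := tauCyl Y) rfl ?_
  · convert hbasis using 1
    rw [insert_eq_of_mem]
    exact ⟨0, univ, isOpen_univ, Zcyl_zero_univ.symm⟩
  rintro _ ⟨k, U, hU, rfl⟩ _ ⟨l, V, hV, rfl⟩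
  rcases le_total k l with hkl | hlk
  · exact ⟨l, _, (hU.preimage (continuous_restrictSeq hkl)).inter hV,
      Zcyl_inter_Zcyl hkl U V⟩
  · exact ⟨k, _, (hV.preimage (continuous_restrictSeq hlk)).inter hU,
      (inter_comm _ _).trans (Zcyl_inter_Zcyl hlk V U)⟩

theorem t0Space_tauCyl [∀ n, T0Space (X n)] : T0Space (PathSpace Y) := by
  refine t0Space_iff_inseparable _ |>.2 fun a b hab => eq_of_forall_mem_Zcyl_iff fun k A => ?_
  have hopen : ∀ U, IsOpen U → (a ∈ Zcyl Y k U ↔ b ∈ Zcyl Y k U) := fun U hU =>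
    inseparable_iff_forall_isOpen.1 hab _ (isOpen_Zcyl hU)
  have hlen : (k : ℕ∞) ≤ plen Y a ↔ (k : ℕ∞) ≤ plen Y b := by
    simpa [mem_Zcyl_iff] using hopen univ isOpen_univ
  have htrunc : ∀ ha hb, truncSeq Y k a ha = truncSeq Y k b hb := fun ha hb =>
    (inseparable_iff_forall_isOpen.2 fun U hU => by
      simpa [mem_Zcyl_iff, ha, hb] using hopen U hU).eq
  simp only [mem_Zcyl_iff]
  exact ⟨fun ⟨ha, hA⟩ => ⟨hlen.1 ha, htrunc ha _ ▸ hA⟩,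
    fun ⟨hb, hA⟩ => ⟨hlen.2 hb, (htrunc _ hb).symm ▸ hA⟩⟩

theorem specializes_of_forall_mem_Zcyl {y z : PathSpace Y}
    (h : ∀ k A, z ∈ Zcyl Y k A → y ∈ Zcyl Y k A) : y ⤳ z := by
  rw [specializes_iff_mem_closure, isTopologicalBasis_Zcyl.mem_closure_iff]
  rintro _ ⟨k, U, -, rfl⟩ hz
  exact ⟨y, h k U hz, rfl⟩

theorem isGenericPoint_of_forall_mem_Zcyl {C : Set (PathSpace Y)} {y : PathSpace Y}
    (hCc : IsClosed C) (hy : y ∈ C) (h : ∀ z ∈ C, ∀ k A, z ∈ Zcyl Y k A → y ∈ Zcyl Y k A) :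
    IsGenericPoint y C :=
  isGenericPoint_iff_specializes.2 fun z =>
    ⟨fun hyz => hyz.mem_closed hCc hy, fun hz => specializes_of_forall_mem_Zcyl (h z hz)⟩

def truncSeqOn (Y : (k : ℕ) → Set ((i : Fin k) → X i.1)) (k : ℕ) :
    Zcyl Y k univ → ((i : Fin k) → X i.1) :=
  fun p => truncSeq Y k p.1 (mem_Zcyl_iff.1 p.2).1

theorem continuous_truncSeqOn (k : ℕ) : Continuous (truncSeqOn Y k) := by
  refine continuous_def.2 fun U hU => ?_
  convert (isOpen_Zcyl hU).preimage continuous_subtype_val using 1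
  ext p
  simp [truncSeqOn, mem_Zcyl_iff, (mem_Zcyl_iff.1 p.2).1]

theorem truncSeq_eq_of_isPreirreducible [∀ n, T1Space (X n)] [∀ n, QuasiSober (X n)]
    {C : Set (PathSpace Y)} (hC : IsPreirreducible C) {k : ℕ} {p q : PathSpace Y}
    (hp : p ∈ C) (hq : q ∈ C) (hpk : (k : ℕ∞) ≤ plen Y p) (hqk : (k : ℕ∞) ≤ plen Y q) :
    truncSeq Y k p hpk = truncSeq Y k q hqk := by
  have hopen : IsOpen (Zcyl Y k univ) := isOpen_Zcyl isOpen_univ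
  have hirr := (hC.preimage hopen.isOpenEmbedding_subtypeVal).image _
    (continuous_truncSeqOn k).continuousOn
  exact hirr.subsingleton_pi ⟨⟨p, mem_Zcyl_iff.2 ⟨hpk, trivial⟩⟩, hp, rfl⟩
    ⟨⟨q, mem_Zcyl_iff.2 ⟨hqk, trivial⟩⟩, hq, rfl⟩

section Sober

variable [∀ n, T1Space (X n)] [∀ n, QuasiSober (X n)] {C : Set (PathSpace Y)}

theorem isGenericPoint_of_forall_plen_le (hC : IsPreirreducible C) (hCc : IsClosed C)
    {p : PathSpace Y} (hp : p ∈ C) (hmax : ∀ q ∈ C, plen Y q ≤ plen Y p) :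
    IsGenericPoint p C := by
  refine isGenericPoint_of_forall_mem_Zcyl hCc hp fun z hz k A h => ?_
  obtain ⟨hk, hA⟩ := mem_Zcyl_iff.1 h
  have hkp := hk.trans (hmax z hz)
  exact mem_Zcyl_iff.2 ⟨hkp, truncSeq_eq_of_isPreirreducible hC hz hp hk hkp ▸ hA⟩

theorem exists_isGenericPoint_of_forall_exists_le_plen
    (hcompat : ∀ (k l : ℕ) (h : k ≤ l), ∀ f ∈ Y l, restrictSeq h f ∈ Y k)
    (hC : IsPreirreducible C) (hCc : IsClosed C)
    (hlev : ∀ k : ℕ, ∃ p ∈ C, (k : ℕ∞) ≤ plen Y p) : ∃ y, IsGenericPoint y C := by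
  choose p hpC hpk using hlev
  let g : (n : ℕ) → X n := fun n => truncSeq Y (n + 1) (p (n + 1)) (hpk _) ⟨n, n.lt_succ_self⟩
  have hg : ∀ k : ℕ, ∀ q ∈ C, ∀ hq : (k : ℕ∞) ≤ plen Y q,
      (fun i : Fin k => g i) = truncSeq Y k q hq := by
    intro k q hqC hq
    funext i
    have hiq : ((i + 1 : ℕ) : ℕ∞) ≤ plen Y q := le_trans (by exact_mod_cast i.2) hq
    calc g i = truncSeq Y (i + 1) q hiq ⟨i, i.1.lt_succ_self⟩ :=
          congrFun (truncSeq_eq_of_isPreirreducible hC (hpC _) hqC _ hiq) _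
      _ = truncSeq Y k q hq i := (congrFun (restrictSeq_truncSeq i.2 q hq hiq) _).symm
  have hgY : ∀ k, (fun i : Fin k => g i) ∈ Y k := fun k =>
    hg k _ (hpC k) (hpk k) ▸ truncSeq_mem hcompat _ _
  let y : PathSpace Y := Sum.inr ⟨g, hgY⟩
  have hyC : y ∈ C := by
    rw [← hCc.closure_eq, isTopologicalBasis_Zcyl.mem_closure_iff]
    rintro _ ⟨k, U, -, rfl⟩ hy
    exact ⟨p k, mem_Zcyl_iff.2 ⟨hpk k, hg k _ (hpC k) (hpk k) ▸ hy⟩, hpC k⟩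
  refine ⟨y, isGenericPoint_of_forall_mem_Zcyl hCc hyC fun z hz k A h => ?_⟩
  obtain ⟨hk, hA⟩ := mem_Zcyl_iff.1 h
  show (fun i : Fin k => g i) ∈ A
  exact hg k z hz hk ▸ hA

theorem quasiSober_tauCyl
    (hcompat : ∀ (k l : ℕ) (h : k ≤ l), ∀ f ∈ Y l, restrictSeq h f ∈ Y k) :
    QuasiSober (PathSpace Y) := by
  refine ⟨fun {C} hC hCc => ?_⟩
  by_cases hmax : ∃ p ∈ C, ∀ q ∈ C, plen Y q ≤ plen Y p
  · obtain ⟨p, hp, hmax⟩ := hmax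
    exact ⟨p, isGenericPoint_of_forall_plen_le hC.2 hCc hp hmax⟩
  refine exists_isGenericPoint_of_forall_exists_le_plen hcompat hC.2 hCc fun k => ?_
  -- a finite supremum of lengths would be attained
  have hsup : sSup (plen Y '' C) = ⊤ := by
    by_contra hne
    have : Nonempty (plen Y '' C) := (hC.1.image _).to_subtype
    obtain ⟨p, hp, hpsup⟩ := ENat.sSup_mem_of_nonempty_of_lt_top (lt_top_iff_ne_top.2 hne)
    exact hmax ⟨p, hp, fun q hq => hpsup ▸ le_sSup (mem_image_of_mem _ hq)⟩
  obtain ⟨_, ⟨p, hp, rfl⟩, hk⟩ := lt_sSup_iff.1 (hsup ▸ ENat.natCast_lt_top k)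
  exact ⟨p, hp, hk.le⟩

end Sober

end PathSpace

theorem stmt_6_general [∀ n, TopologicalSpace (X n)] [∀ n, T1Space (X n)] [∀ n, QuasiSober (X n)]
    (Y : (k : ℕ) → Set ((i : Fin k) → X i.1))
    (hcompat : ∀ (k l : ℕ) (h : k ≤ l), ∀ f ∈ Y l, restrictSeq h f ∈ Y k) :
    Function.Bijective
      (fun y : PathSpace Y => @pointOf (PathSpace Y) (tauCyl Y) y) := by
  let := tauCyl Y
  have := t0Space_tauCyl (Y := Y)
  have := quasiSober_tauCyl hcompat
  exact bijective_pointOf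

/-- with the cylinder topology, the space of finite and infinite
compatible sequences over `T1` sober spaces is sober: the canonical map
`Φ : Y → pt(τ_cyl)` is a bijection. -/
theorem stmt_6 [∀ n, TopologicalSpace (X n)] [∀ n, T1Space (X n)] [∀ n, QuasiSober (X n)]
    (Y : (k : ℕ) → Set ((i : Fin k) → X i.1))
    (hclosed : ∀ k, IsClosed (Y k))
    (hcompat : ∀ (k l : ℕ) (h : k ≤ l), ∀ f ∈ Y l, restrictSeq h f ∈ Y k) :
    Function.Bijective
      (fun y : PathSpace Y => @pointOf (PathSpace Y) (tauCyl Y) y) :=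
  stmt_6_general Y hcompat
end

section
/- Let Y carry the cylinder topology τ_cyl, where each Y_k is locally compact and T1. If K ⊆ Y_k is compact, then the cylinder set Z(K) ⊆ Y is compact and saturated in (Y, τ_cyl). -/
open Set Topology TopologicalSpace Filter

universe u

variable {X : ℕ → Type u}

lemma Zcyl_mono (Y : (k : ℕ) → Set ((i : Fin k) → X i.1)) (k : ℕ)
    {A B : Set ((i : Fin k) → X i.1)} (hAB : A ⊆ B) : Zcyl Y k A ⊆ Zcyl Y k B := by
  intro p hp
  cases p with
  | inl q =>
    obtain ⟨h, hm⟩ := hp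
    exact ⟨h, hAB hm⟩
  | inr g => exact hAB hp

lemma key_lemma [∀ n, TopologicalSpace (X n)] (Y : (k : ℕ) → Set ((i : Fin k) → X i.1))
    (k : ℕ) (x : (i : Fin k) → X i.1) (hx : x ∈ Y k)
    (W : Set (PathSpace Y))
    (hW : TopologicalSpace.GenerateOpen
      {S | ∃ (m : ℕ) (U : Set ((i : Fin m) → X i.1)), IsOpen U ∧ S = Zcyl Y m U} W)
    (hmem : (Sum.inl ⟨k, x, hx⟩ : PathSpace Y) ∈ W) :
    Zcyl Y k {x} ⊆ W := by
  induction hW with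
  | basic S hS =>
    obtain ⟨m, U, hU, rfl⟩ := hS
    obtain ⟨hmk, hmU⟩ := hmem
    intro p hp
    cases p with
    | inl q =>
      obtain ⟨l, f, hf⟩ := q
      obtain ⟨hkl, hfx⟩ := hp
      refine ⟨hmk.trans hkl, ?_⟩
      have h1 : restrictSeq (hmk.trans hkl) f = restrictSeq hmk (restrictSeq hkl f) := rfl
      rw [h1, hfx]
      exact hmU
    | inr g =>
      have hgx : (fun i : Fin k => g.1 i.1) = x := hp
      show (fun i : Fin m => g.1 i.1) ∈ U
      have h2 : (fun i : Fin m => g.1 i.1) = restrictSeq hmk (fun i : Fin k => g.1 i.1) := rfl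
      rw [h2, hgx]
      exact hmU
  | univ => exact subset_univ _
  | inter W1 W2 _ _ ih1 ih2 =>
    exact subset_inter (ih1 hmem.1) (ih2 hmem.2)
  | sUnion S _ ih =>
    obtain ⟨s, hs, hmem'⟩ := hmem
    exact (ih s hs hmem').trans (subset_sUnion_of_mem hs)

/-- Separation: a compact set inside `Y k` can be separated from a point of `Y k`
outside it by an ambient open set. -/
lemma sep_lemma [∀ n, TopologicalSpace (X n)] (Y : (k : ℕ) → Set ((i : Fin k) → X i.1))
    (hclosed : ∀ k, IsClosed (Y k))
    (hT1 : ∀ k, T1Space {f : (i : Fin k) → X i.1 // f ∈ Y k})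
    (k : ℕ) (K : Set ((i : Fin k) → X i.1)) (hKY : K ⊆ Y k)
    (x : (i : Fin k) → X i.1) (hx : x ∈ Y k) (hxK : x ∉ K) :
    ∃ U : Set ((i : Fin k) → X i.1), IsOpen U ∧ K ⊆ U ∧ x ∉ U := by
  haveI := hT1 k
  have hsing : IsOpen (({⟨x, hx⟩} : Set {f : (i : Fin k) → X i.1 // f ∈ Y k})ᶜ) :=
    isClosed_singleton.isOpen_compl
  rw [isOpen_induced_iff] at hsing
  obtain ⟨W, hW, hWe⟩ := hsing
  refine ⟨W ∪ (Y k)ᶜ, hW.union (hclosed k).isOpen_compl, ?_, ?_⟩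
  · intro y hy
    left
    have hyY : y ∈ Y k := hKY hy
    have : (⟨y, hyY⟩ : {f : (i : Fin k) → X i.1 // f ∈ Y k}) ∈ Subtype.val ⁻¹' W := by
      rw [hWe]
      simp only [mem_compl_iff, mem_singleton_iff]
      intro hcon
      apply hxK
      have : y = x := congrArg Subtype.val hcon
      rwa [← this]
    exact this
  · rintro (hxW | hxY)
    · have : (⟨x, hx⟩ : {f : (i : Fin k) → X i.1 // f ∈ Y k}) ∈ Subtype.val ⁻¹' W := hxW
      rw [hWe] at this
      exact this rfl
    · exact hxY hx

/-- if `K ⊆ Y k` is compact then the cylinder `Z(K)` is compact and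
saturated in `(Y, τ_cyl)` (each `Y k` being locally compact and `T1`). -/
theorem stmt_7 [∀ n, TopologicalSpace (X n)]
    (Y : (k : ℕ) → Set ((i : Fin k) → X i.1))
    (hclosed : ∀ k, IsClosed (Y k))
    (hcompat : ∀ (k l : ℕ) (h : k ≤ l), ∀ f ∈ Y l, restrictSeq h f ∈ Y k)
    (hT1 : ∀ k, T1Space {f : (i : Fin k) → X i.1 // f ∈ Y k})
    (hLC : ∀ k, LocallyCompactSpace {f : (i : Fin k) → X i.1 // f ∈ Y k})
    (k : ℕ) (K : Set ((i : Fin k) → X i.1)) (hKY : K ⊆ Y k) (hK : IsCompact K) :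
    @IsCompact (PathSpace Y) (tauCyl Y) (Zcyl Y k K) ∧
      @SaturatedSet (PathSpace Y) (tauCyl Y) (Zcyl Y k K) := by
  letI : TopologicalSpace (PathSpace Y) := tauCyl Y
  have hopen_iff : ∀ W : Set (PathSpace Y), IsOpen W ↔
      TopologicalSpace.GenerateOpen
        {S | ∃ (m : ℕ) (U : Set ((i : Fin m) → X i.1)), IsOpen U ∧ S = Zcyl Y m U} W :=
    fun W => Iff.rfl
  constructor
  · -- compactness
    apply isCompact_of_finite_subcover
    intro ι U hU hcover
    -- the subtype
    set S := {f : (i : Fin k) → X i.1 // f ∈ Y k}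
    set ι0 : S → PathSpace Y := fun x => Sum.inl ⟨k, x.1, x.2⟩ with hι0
    have hι0cont : Continuous ι0 := by
      refine continuous_generateFrom_iff.mpr ?_
      rintro s ⟨m, V, hV, rfl⟩
      by_cases hmk : m ≤ k
      · have : ι0 ⁻¹' Zcyl Y m V = (fun x : S => restrictSeq hmk x.1) ⁻¹' V := by
          ext x
          simp only [mem_preimage, hι0]
          constructor
          · rintro ⟨h, hm⟩; exact hm
          · intro hm; exact ⟨hmk, hm⟩
        rw [this]
        refine (hV.preimage ?_)
        exact (continuous_pi fun i => (continuous_apply _).comp continuous_subtype_val)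
      · have : ι0 ⁻¹' Zcyl Y m V = ∅ := by
          ext x
          simp only [mem_preimage, mem_empty_iff_false, iff_false, hι0]
          rintro ⟨h, _⟩
          exact hmk h
        rw [this]; exact isOpen_empty
    have hK' : IsCompact (Subtype.val ⁻¹' K : Set S) := by
      rw [Topology.IsEmbedding.subtypeVal.isCompact_iff]
      have : Subtype.val '' (Subtype.val ⁻¹' K : Set S) = K := by
        rw [Subtype.image_preimage_coe]
        exact inter_eq_right.mpr hKY
      rwa [this]
    have hcov' : (Subtype.val ⁻¹' K : Set S) ⊆ ⋃ i, ι0 ⁻¹' U i := by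
      intro x hxK
      have : ι0 x ∈ Zcyl Y k K := ⟨le_refl k, hxK⟩
      obtain ⟨_, ⟨i, rfl⟩, hmem⟩ := hcover this
      exact mem_iUnion.mpr ⟨i, hmem⟩
    obtain ⟨t, ht⟩ := hK'.elim_finite_subcover (fun i => ι0 ⁻¹' U i)
      (fun i => (hU i).preimage hι0cont) hcov'
    refine ⟨t, ?_⟩
    intro p hp
    -- get the truncation of p
    have : ∃ (x : (i : Fin k) → X i.1) (hx : x ∈ Y k), x ∈ K ∧ p ∈ Zcyl Y k {x} := by
      cases p with
      | inl q =>
        obtain ⟨l, f, hf⟩ := q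
        obtain ⟨hkl, hfK⟩ := hp
        exact ⟨restrictSeq hkl f, hcompat k l hkl f hf, hfK, hkl, rfl⟩
      | inr g =>
        exact ⟨fun i : Fin k => g.1 i.1, g.2 k, hp, rfl⟩
    obtain ⟨x, hx, hxK, hpx⟩ := this
    have hxt : (⟨x, hx⟩ : S) ∈ ⋃ i ∈ t, ι0 ⁻¹' U i := ht hxK
    rw [mem_iUnion₂] at hxt
    obtain ⟨i, hit, hiU⟩ := hxt
    have hsub : Zcyl Y k {x} ⊆ U i :=
      key_lemma Y k x hx (U i) ((hopen_iff (U i)).mp (hU i)) hiU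
    exact mem_iUnion₂.mpr ⟨i, hit, hsub hpx⟩
  · -- saturation
    refine Set.Subset.antisymm ?_ ?_
    · intro p hp O hO
      exact hO.2 hp
    · intro p hp
      by_contra hpZ
      have hexists : ∃ O : Set (PathSpace Y), IsOpen O ∧ Zcyl Y k K ⊆ O ∧ p ∉ O := by
        cases p with
        | inl q =>
          obtain ⟨l, f, hf⟩ := q
          have hpZ' : ¬∃ h : k ≤ l, restrictSeq h f ∈ K := hpZ
          rcases le_or_gt k l with hkl | hlk
          · have hxK : restrictSeq hkl f ∉ K := fun hc => hpZ' ⟨hkl, hc⟩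
            obtain ⟨U, hUo, hKU, hxU⟩ := sep_lemma Y hclosed hT1 k K hKY
              (restrictSeq hkl f) (hcompat k l hkl f hf) hxK
            refine ⟨Zcyl Y k U, ?_, Zcyl_mono Y k hKU, ?_⟩
            · exact (hopen_iff _).mpr (.basic _ ⟨k, U, hUo, rfl⟩)
            · rintro ⟨h, hm⟩
              exact hxU hm
          · refine ⟨Zcyl Y k univ, ?_, Zcyl_mono Y k (subset_univ K), ?_⟩
            · exact (hopen_iff _).mpr (.basic _ ⟨k, univ, isOpen_univ, rfl⟩)
            · rintro ⟨h, _⟩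
              exact absurd h (not_le.mpr hlk)
        | inr g =>
          have hxK : (fun i : Fin k => g.1 i.1) ∉ K := hpZ
          obtain ⟨U, hUo, hKU, hxU⟩ := sep_lemma Y hclosed hT1 k K hKY
            (fun i : Fin k => g.1 i.1) (g.2 k) hxK
          refine ⟨Zcyl Y k U, ?_, Zcyl_mono Y k hKU, fun hm => hxU hm⟩
          exact (hopen_iff _).mpr (.basic _ ⟨k, U, hUo, rfl⟩)
      obtain ⟨O, hOo, hZO, hpO⟩ := hexists
      exact hpO (hp O ⟨hOo, hZO⟩)
end

section
/- Let E = (E⁰, E¹, d, r) be a directed graph. For finite paths μ, ν and finite sets F ⊆ r⁻¹(d(μ)), G ⊆ r⁻¹(d(ν)), the basic set Z({ν}) ∩ (⋃_{f∈G} Z({νf}))ᶜ is contained in Z({μ}) ∩ (⋃_{e∈F} Z({μe}))ᶜ if and only if either ν = μ and F ⊆ G, or |ν| > |μ|, μ is a prefix of ν, and ν_{|μ|+1} ∉ F. -/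
/-!
The path `ν` itself lies in `Z({ν}) ∖ ⋃_{f∈G} Z({νf})`, so containment forces `μ` to be a prefix
of `ν`, and, when `μ` is proper, forbids `ν_{|μ|+1} ∈ F`. When `ν = μ`, an edge `e ∈ F ∖ G` would
give the path `νe`, which lies in the smaller set but also in `Z({μe})`. Conversely, a path
extending `ν` extends `μ`, and its edge at position `|μ|` is `ν_{|μ|+1}`.
-/

/-- A finite path in a directed graph with vertex set `V`, edge set `E`, domain
map `d` and range map `r`: a chained list of edges `μ₁…μₙ` (with
`d μᵢ = r μ_{i+1}`) together with its terminal vertex `vert = d μ`; a vertex is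
the path with no edges. -/
structure FinPath (V E : Type*) (d r : E → V) where
  vert : V
  edges : List E
  chain : edges.Chain' (fun a b => d a = r b)
  compat : ∀ h : edges ≠ [], d (edges.getLast h) = vert

/-- An infinite path: a chained infinite sequence of edges. -/
structure InfPath (V E : Type*) (d r : E → V) where
  seq : ℕ → E
  chain : ∀ i : ℕ, d (seq i) = r (seq (i + 1))

/-- The space of all finite and infinite paths of a directed graph. -/
def GPath (V E : Type*) (d r : E → V) : Type _ :=
  FinPath V E d r ⊕ InfPath V E d r

/-- `HasRawPrefix d r p es v` says that the path `p` has the finite path with edge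
list `es` and terminal vertex `v` as a prefix. -/
def HasRawPrefix {V E : Type*} (d r : E → V) (p : GPath V E d r)
    (es : List E) (v : V) : Prop :=
  Sum.elim
    (fun ξ : FinPath V E d r =>
      es <+: ξ.edges ∧
      (∀ h : es.length < ξ.edges.length, v = r (ξ.edges.get ⟨es.length, h⟩)) ∧
      (es.length = ξ.edges.length → v = ξ.vert))
    (fun g : InfPath V E d r =>
      (∀ (i : ℕ) (h : i < es.length), es.get ⟨i, h⟩ = g.seq i) ∧ v = r (g.seq es.length))
    p

/-- The cylinder set `Z({μ})` of all paths with prefix `μ`. -/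
def ZP {V E : Type*} (d r : E → V) (μ : FinPath V E d r) : Set (GPath V E d r) :=
  {p | HasRawPrefix d r p μ.edges μ.vert}

/-- The cylinder set `Z({μe})` of all paths with prefix the extension of `μ` by
the edge `e`. -/
def ZPe {V E : Type*} (d r : E → V) (μ : FinPath V E d r) (e : E) :
    Set (GPath V E d r) :=
  {p | HasRawPrefix d r p (μ.edges ++ [e]) (d e)}

/-- The basic set `Z({μ}) ∩ (⋃_{e ∈ F} Z({μe}))ᶜ`. -/
def ZB {V E : Type*} (d r : E → V) (μ : FinPath V E d r) (F : Set E) :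
    Set (GPath V E d r) :=
  ZP d r μ ∩ (⋃ e ∈ F, ZPe d r μ e)ᶜ
namespace FinPath

variable {V E : Type*} {d r : E → V}

theorem ext {μ ν : FinPath V E d r} (hv : μ.vert = ν.vert) (he : μ.edges = ν.edges) :
    μ = ν := by
  cases μ; cases ν; simp_all

def snoc (μ : FinPath V E d r) (e : E) (he : r e = μ.vert) : FinPath V E d r where
  vert := d e
  edges := μ.edges ++ [e]
  chain := by
    refine List.isChain_append.2 ⟨μ.chain, List.isChain_singleton _, ?_⟩
    rintro x hx y ⟨⟩
    obtain ⟨hne, rfl⟩ := List.mem_getLast?_eq_getLast hx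
    rw [μ.compat hne, he]
  compat _ := by rw [List.getLast_concat]

end FinPath

section HasRawPrefix

variable {V E : Type*} {d r : E → V}

theorem hasRawPrefix_self (ξ : FinPath V E d r) :
    HasRawPrefix d r (.inl ξ) ξ.edges ξ.vert :=
  ⟨List.prefix_refl _, fun h => absurd h (lt_irrefl _), fun _ => rfl⟩

theorem HasRawPrefix.isPrefix {ξ : FinPath V E d r} {es : List E} {v : V}
    (h : HasRawPrefix d r (.inl ξ) es v) : es <+: ξ.edges :=
  h.1

theorem HasRawPrefix.eq_of_length_eq {μ ν : FinPath V E d r}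
    (h : HasRawPrefix d r (.inl ν) μ.edges μ.vert) (hl : μ.edges.length = ν.edges.length) :
    μ = ν :=
  FinPath.ext (h.2.2 hl) (h.1.eq_of_length hl)

theorem HasRawPrefix.getElem_eq {p : GPath V E d r} {es es' : List E} {v v' : V} {i : ℕ}
    (h : HasRawPrefix d r p es v) (h' : HasRawPrefix d r p es' v')
    (hi : i < es.length) (hi' : i < es'.length) : es[i] = es'[i] := by
  rcases p with ξ | g
  · rw [h.1.getElem hi, h'.1.getElem hi']
  · exact (h.1 i hi).trans (h'.1 i hi').symm

theorem HasRawPrefix.trans {p : GPath V E d r} {ν : FinPath V E d r} {es : List E} {v : V}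
    (h : HasRawPrefix d r (.inl ν) es v) (hp : HasRawPrefix d r p ν.edges ν.vert) :
    HasRawPrefix d r p es v := by
  obtain ⟨hpre, hmid, hend⟩ := h
  simp only [HasRawPrefix, List.get_eq_getElem] at hmid hend ⊢
  rcases p with ξ | g
  · obtain ⟨hνξ, hνmid, hνend⟩ := hp
    simp only [List.get_eq_getElem] at hνmid
    have hνξlen := hνξ.length_le
    refine ⟨hpre.trans hνξ, fun hξ => ?_, fun hξ => ?_⟩
    · rcases hpre.length_le.lt_or_eq with hlt | heq
      · rw [hmid hlt, hνξ.getElem hlt]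
      · rw [hend heq, hνmid (heq ▸ hξ)]
        simp only [heq]
    · have heq : es.length = ν.edges.length := by have := hpre.length_le; omega
      rw [hend heq, hνend (by omega)]
  · obtain ⟨hνg, hνv⟩ := hp
    simp only [List.get_eq_getElem] at hνg
    refine ⟨fun i hi => ?_, ?_⟩
    · rw [hpre.getElem hi]
      exact hνg i (hi.trans_le hpre.length_le)
    · rcases hpre.length_le.lt_or_eq with hlt | heq
      · rw [hmid hlt, hνg _ hlt]
      · rw [hend heq, hνv, heq]

theorem HasRawPrefix.append_getElem {ν : FinPath V E d r} {es : List E} {v : V}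
    (h : HasRawPrefix d r (.inl ν) es v) (hl : es.length < ν.edges.length) :
    HasRawPrefix d r (.inl ν) (es ++ [ν.edges[es.length]]) (d ν.edges[es.length]) := by
  have hes : es = ν.edges.take es.length := List.prefix_iff_eq_take.1 h.1
  simp only [HasRawPrefix, Sum.elim_inl, List.get_eq_getElem, List.length_append,
    List.length_singleton]
  refine ⟨?_, fun hl' => ?_, fun hl' => ?_⟩
  · rw [List.prefix_iff_eq_take, List.length_append, List.length_singleton,
      ← List.take_concat_get' _ _ hl, ← hes]
  · exact List.isChain_iff_getElem.1 ν.chain es.length hl'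
  · have hne : ν.edges ≠ [] := List.ne_nil_of_length_pos (by omega)
    simp only [← ν.compat hne, List.getLast_eq_getElem, ← hl', Nat.add_sub_cancel]

end HasRawPrefix

section BasicSet

variable {V E : Type*} {d r : E → V}

theorem mem_ZPe {p : GPath V E d r} {μ : FinPath V E d r} {e : E} :
    p ∈ ZPe d r μ e ↔ HasRawPrefix d r p (μ.edges ++ [e]) (d e) :=
  Iff.rfl

theorem self_mem_ZB (ν : FinPath V E d r) (G : Set E) :
    (.inl ν : GPath V E d r) ∈ ZB d r ν G := by
  refine ⟨hasRawPrefix_self ν, fun hmem => ?_⟩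
  obtain ⟨f, -, hf⟩ := Set.mem_iUnion₂.1 hmem
  simpa using hf.isPrefix.length_le

theorem snoc_mem_ZB {ν : FinPath V E d r} {G : Set E} {e : E} (he : r e = ν.vert)
    (heG : e ∉ G) : (.inl (ν.snoc e he) : GPath V E d r) ∈ ZB d r ν G := by
  refine ⟨⟨⟨[e], rfl⟩, fun _ => ?_, fun h => ?_⟩, fun hmem => ?_⟩
  · simp [FinPath.snoc, he]
  · simp [FinPath.snoc] at h
  · obtain ⟨f, hfG, hf⟩ := Set.mem_iUnion₂.1 hmem
    have hfe := (mem_ZPe.1 hf).getElem_eq (hasRawPrefix_self (ν.snoc e he))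
      (i := ν.edges.length) (by simp) (by simp [FinPath.snoc])
    simp only [FinPath.snoc, List.getElem_concat_length] at hfe
    exact heG (hfe ▸ hfG)

theorem ZB_subset_ZB_of_subset {μ : FinPath V E d r} {F G : Set E} (hFG : F ⊆ G) :
    ZB d r μ G ⊆ ZB d r μ F :=
  Set.inter_subset_inter_right _ (Set.compl_subset_compl.2 (Set.biUnion_subset_biUnion_left hFG))

theorem subset_of_ZB_subset_ZB {μ : FinPath V E d r} {F G : Set E}
    (hFr : ∀ e ∈ F, r e = μ.vert) (h : ZB d r μ G ⊆ ZB d r μ F) : F ⊆ G := by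
  intro e heF
  by_contra heG
  exact (h (snoc_mem_ZB (hFr e heF) heG)).2
    (Set.mem_iUnion₂.2 ⟨e, heF, mem_ZPe.2 (hasRawPrefix_self _)⟩)

theorem ZB_subset_ZB_of_lt {μ ν : FinPath V E d r} {F G : Set E}
    (hlt : μ.edges.length < ν.edges.length) (hpre : HasRawPrefix d r (.inl ν) μ.edges μ.vert)
    (hF : ν.edges[μ.edges.length] ∉ F) : ZB d r ν G ⊆ ZB d r μ F := by
  rintro p ⟨hpν, -⟩
  refine ⟨hpre.trans hpν, fun hmem => ?_⟩
  obtain ⟨e, heF, hpe⟩ := Set.mem_iUnion₂.1 hmem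
  have hen := (mem_ZPe.1 hpe).getElem_eq hpν (i := μ.edges.length) (by simp) hlt
  simp only [List.getElem_concat_length] at hen
  exact hF (hen ▸ heF)

end BasicSet

theorem stmt_13_general {V E : Type*} (d r : E → V) (μ ν : FinPath V E d r)
    (F G : Set E) (hFr : ∀ e ∈ F, r e = μ.vert) :
    ZB d r ν G ⊆ ZB d r μ F ↔
      (ν = μ ∧ F ⊆ G) ∨
      (μ.edges.length < ν.edges.length ∧
        HasRawPrefix d r (Sum.inl ν) μ.edges μ.vert ∧
        ∀ h : μ.edges.length < ν.edges.length,
          ν.edges.get ⟨μ.edges.length, h⟩ ∉ F) := by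
  simp only [List.get_eq_getElem]
  constructor
  · intro hsub
    obtain ⟨hpre, hnot⟩ := hsub (self_mem_ZB ν G)
    rcases hpre.isPrefix.length_le.lt_or_eq with hlt | heq
    · exact .inr ⟨hlt, hpre, fun h heF =>
        hnot (Set.mem_iUnion₂.2 ⟨_, heF, hpre.append_getElem h⟩)⟩
    · obtain rfl := hpre.eq_of_length_eq heq
      exact .inl ⟨rfl, subset_of_ZB_subset_ZB hFr hsub⟩
  · rintro (⟨rfl, hFG⟩ | ⟨hlt, hpre, hF⟩)
    · exact ZB_subset_ZB_of_subset hFG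
    · exact ZB_subset_ZB_of_lt hlt hpre (hF hlt)

/-- containment of basic sets
`Z({ν}) ∩ (⋃_{f∈G} Z({νf}))ᶜ ⊆ Z({μ}) ∩ (⋃_{e∈F} Z({μe}))ᶜ` holds iff either
`ν = μ` and `F ⊆ G`, or `|ν| > |μ|`, `μ` is a prefix of `ν` and `ν_{|μ|+1} ∉ F`. -/
theorem stmt_13 {V E : Type*} (d r : E → V) (μ ν : FinPath V E d r)
    (F G : Set E) (hF : F.Finite) (hG : G.Finite)
    (hFr : ∀ e ∈ F, r e = μ.vert) (hGr : ∀ e ∈ G, r e = ν.vert) :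
    ZB d r ν G ⊆ ZB d r μ F ↔
      (ν = μ ∧ F ⊆ G) ∨
      (μ.edges.length < ν.edges.length ∧
        HasRawPrefix d r (Sum.inl ν) μ.edges μ.vert ∧
        ∀ h : μ.edges.length < ν.edges.length,
          ν.edges.get ⟨μ.edges.length, h⟩ ∉ F) :=
  stmt_13_general d r μ ν F G hFr
end

section
/- Let E be a directed graph. Define a vertex to be regular if it receives at least one and only finitely many edges, and singular otherwise. The set Y of paths ξ (finite or infinite) such that: for every finite path μ with regular d(μ) and every finite F ⊆ r⁻¹(d(μ)) with F ≠ r⁻¹(d(μ)), if ξ ∈ Z({μ}) ∩ (⋃_{e∈F} Z({μe}))ᶜ then ξ ∈ Z({μe}) for some e ∈ r⁻¹(d(μ)) \ F, is exactly the boundary path space ∂E = {μ ∈ E* : d(μ) singular} ∪ E^∞. -/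
/-- A vertex is regular if it receives at least one and only finitely many edges. -/
def IsRegularV {V E : Type*} (d r : E → V) (v : V) : Prop :=
  {e | r e = v}.Nonempty ∧ {e | r e = v}.Finite

/-!
The cylinder `Z({μ})` splits as `{μ} ∪ ⋃_{r e = d μ} Z({μe})`, and `μ ∉ Z({μe})`. Hence a path
in `Z({μ}) ∖ ⋃_{e ∈ F} Z({μe})` lies in some `Z({μe})` with `e ∉ F` unless it is `μ` itself,
which cannot happen for a boundary path when `d μ` is regular. Conversely a finite path `μ`
with `d μ` regular violates the condition for `μ` itself and `F = ∅`.
-/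

section

variable {V E : Type*} {d r : E → V}

theorem inl_mem_ZP_self (μ : FinPath V E d r) : (Sum.inl μ : GPath V E d r) ∈ ZP d r μ :=
  ⟨List.prefix_refl _, fun h => (lt_irrefl _ h).elim, fun _ => rfl⟩

theorem inl_notMem_ZPe_self (μ : FinPath V E d r) (e : E) :
    (Sum.inl μ : GPath V E d r) ∉ ZPe d r μ e := fun h => by
  simpa using h.1.length_le

theorem eq_of_inl_mem_ZP_of_length_eq {μ ν : FinPath V E d r}
    (h : (Sum.inl ν : GPath V E d r) ∈ ZP d r μ) (hlen : μ.edges.length = ν.edges.length) :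
    ν = μ := by
  obtain ⟨hpre, -, hvert⟩ := h
  have hedges := hpre.eq_of_length hlen
  cases μ; cases ν
  simp_all

theorem inl_mem_ZPe_of_mem_ZP {μ ν : FinPath V E d r}
    (h : (Sum.inl ν : GPath V E d r) ∈ ZP d r μ) (hlt : μ.edges.length < ν.edges.length) :
    (Sum.inl ν : GPath V E d r) ∈ ZPe d r μ ν.edges[μ.edges.length] := by
  obtain ⟨hpre, -, -⟩ := h
  have htake : μ.edges ++ [ν.edges[μ.edges.length]] = ν.edges.take (μ.edges.length + 1) := by
    rw [← List.take_concat_get' _ _ hlt, ← List.prefix_iff_eq_take.mp hpre]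
  refine ⟨htake ▸ List.take_prefix _ _, fun hlt' => ?_, fun hlen => ?_⟩
  · simp only [List.length_append, List.length_singleton, List.get_eq_getElem] at hlt' ⊢
    exact List.isChain_iff_getElem.mp ν.chain _ hlt'
  · have hne : ν.edges ≠ [] := List.ne_nil_of_length_pos (by omega)
    simp only [List.length_append, List.length_singleton] at hlen
    rw [← ν.compat hne, List.getLast_eq_getElem]
    congr 2
    omega

theorem inr_mem_ZPe_of_mem_ZP {μ : FinPath V E d r} {g : InfPath V E d r}
    (h : (Sum.inr g : GPath V E d r) ∈ ZP d r μ) :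
    (Sum.inr g : GPath V E d r) ∈ ZPe d r μ (g.seq μ.edges.length) := by
  refine ⟨fun i hi => ?_, by simpa using g.chain _⟩
  simp only [List.length_append, List.length_singleton] at hi
  rcases (Nat.lt_succ_iff_lt_or_eq.mp hi) with hi | rfl
  · simpa [List.getElem_append_left hi] using h.1 i hi
  · simp

theorem exists_mem_ZPe_of_mem_ZP {μ : FinPath V E d r} {ξ : GPath V E d r}
    (h : ξ ∈ ZP d r μ) (hξ : ξ ≠ Sum.inl μ) : ∃ e, r e = μ.vert ∧ ξ ∈ ZPe d r μ e := by
  cases ξ with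
  | inl ν =>
    have hlt : μ.edges.length < ν.edges.length := h.1.length_le.lt_of_ne fun hlen =>
      hξ (congrArg Sum.inl (eq_of_inl_mem_ZP_of_length_eq h hlen))
    exact ⟨_, (h.2.1 hlt).symm, inl_mem_ZPe_of_mem_ZP h hlt⟩
  | inr g => exact ⟨_, h.2.symm, inr_mem_ZPe_of_mem_ZP h⟩

end

/-- the set of paths `ξ` such that, for every finite path `μ` with
regular terminal vertex and every finite `F ⊆ r⁻¹(d μ)` with `F ≠ r⁻¹(d μ)`, if
`ξ ∈ Z({μ}) ∩ (⋃_{e∈F} Z({μe}))ᶜ` then `ξ ∈ Z({μe})` for some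
`e ∈ r⁻¹(d μ) \ F`, is exactly the boundary path space
`∂E = {μ ∈ E* : d μ singular} ∪ E^∞`. -/
theorem stmt_15 {V E : Type*} (d r : E → V) :
    {ξ : GPath V E d r |
      ∀ (μ : FinPath V E d r) (F : Set E), IsRegularV d r μ.vert →
        F ⊆ {e | r e = μ.vert} → F.Finite → F ≠ {e | r e = μ.vert} →
        ξ ∈ ZB d r μ F →
        ∃ e, r e = μ.vert ∧ e ∉ F ∧ ξ ∈ ZPe d r μ e} =
    {ξ : GPath V E d r |
      ∀ μ : FinPath V E d r, ξ = Sum.inl μ → ¬ IsRegularV d r μ.vert} := by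
  ext ξ
  constructor
  · rintro hξ ν rfl hreg
    have hne : (∅ : Set E) ≠ {e | r e = ν.vert} := fun h => hreg.1.ne_empty h.symm
    have hmem : Sum.inl ν ∈ ZB d r ν ∅ := ⟨inl_mem_ZP_self ν, by
      rw [Set.biUnion_empty, Set.compl_empty]
      trivial⟩
    obtain ⟨e, -, -, he⟩ := hξ ν ∅ hreg (Set.empty_subset _) Set.finite_empty hne hmem
    exact inl_notMem_ZPe_self ν e he
  · rintro hξ μ F hreg - - - ⟨hZP, hnotF⟩
    obtain ⟨e, hre, he⟩ := exists_mem_ZPe_of_mem_ZP hZP fun h => hξ μ h hreg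
    exact ⟨e, hre, fun heF => hnotF (Set.mem_biUnion heF he), he⟩
end

section
/- Let E = (E⁰, E¹, d, r) be a topological graph and v ∈ E⁰. Then v ∈ E⁰_rg if and only if there exists a neighbourhood V of v such that r⁻¹(V) ⊆ E¹ is compact and r(r⁻¹(V)) = V. -/
open Set

variable {E0 E1 : Type*} [TopologicalSpace E0] [TopologicalSpace E1]

/-- `E⁰_fin`: vertices with a neighbourhood whose `r`-preimage is compact. -/
def E0fin (r : E1 → E0) : Set E0 := {v | ∃ V ∈ nhds v, IsCompact (r ⁻¹' V)}

/-- `E⁰_sce = E⁰ \ closure (r(E¹))`. -/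
def E0sce (r : E1 → E0) : Set E0 := (closure (Set.range r))ᶜ

/-- `E⁰_rg = E⁰_fin \ closure (E⁰_sce)`, the set of regular vertices. -/
def E0rg (r : E1 → E0) : Set E0 := E0fin r \ closure (E0sce r)

/-- Katsura, Proposition 2.8: in a topological graph,
`v ∈ E⁰_rg` iff there is a neighbourhood `V` of `v` with `r⁻¹(V)` compact and
`r(r⁻¹(V)) = V`. -/
theorem stmt_16 [LocallyCompactSpace E0] [T2Space E0]
    [LocallyCompactSpace E1] [T2Space E1]
    (d r : E1 → E0) (hr : Continuous r) (hd : IsLocalHomeomorph d) (v : E0) :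
    v ∈ E0rg r ↔ ∃ V ∈ nhds v, IsCompact (r ⁻¹' V) ∧ r '' (r ⁻¹' V) = V := by
  constructor
  · rintro ⟨⟨V₀, hV₀, hcomp⟩, hncl⟩
    have hUopen : IsOpen (closure (E0sce r))ᶜ := isClosed_closure.isOpen_compl
    have hnhds : interior V₀ ∩ (closure (E0sce r))ᶜ ∈ nhds v :=
      Filter.inter_mem (interior_mem_nhds.2 hV₀) (hUopen.mem_nhds hncl)
    obtain ⟨K, hK, hKsub, hKcomp⟩ := local_compact_nhds hnhds
    refine ⟨K, hK, ?_, ?_⟩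
    · exact hcomp.of_isClosed_subset (hKcomp.isClosed.preimage hr)
        (Set.preimage_mono fun x hx => interior_subset (hKsub hx).1)
    · have hKrange : K ⊆ Set.range r := by
        intro x hx
        have h1 : x ∈ interior V₀ ∩ closure (Set.range r) := by
          refine ⟨(hKsub hx).1, ?_⟩
          by_contra hcon
          exact (hKsub hx).2 (subset_closure hcon)
        have h2 : x ∈ closure (interior V₀ ∩ Set.range r) :=
          isOpen_interior.inter_closure h1
        have h3 : closure (interior V₀ ∩ Set.range r) ⊆ r '' (r ⁻¹' V₀) := by
          apply closure_minimal
          · rintro y ⟨hy1, e, rfl⟩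
            exact ⟨e, (interior_subset hy1 : r e ∈ V₀), rfl⟩
          · exact (hcomp.image hr).isClosed
        obtain ⟨e, _, rfl⟩ := h3 h2
        exact ⟨e, rfl⟩
      exact Set.image_preimage_eq_of_subset hKrange
  · rintro ⟨V, hV, hcomp, himg⟩
    refine ⟨⟨V, hV, hcomp⟩, ?_⟩
    rw [mem_closure_iff_nhds]
    push_neg
    refine ⟨V, hV, ?_⟩
    rw [Set.eq_empty_iff_forall_notMem]
    rintro x ⟨hxV, hxs⟩
    have : x ∈ r '' (r ⁻¹' V) := himg.symm ▸ hxV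
    exact hxs (subset_closure (Set.image_subset_range r _ this))
end
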